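/- The logic LP enjoys (B, LP)-interpolation: if φ ⊢_LP ψ then there is a formula χ such that every atom occurring in χ occurs in both φ and ψ, φ ⊢_B χ, and χ ⊢_LP ψ. -/
import Mathlib


/-- Propositional formulas: atoms, conjunction, disjunction, De Morgan negation, ⊤, ⊥. -/
inductive Fm : Type where
  | atom : ℕ → Fm
  | conj : Fm → Fm → Fm
  | disj : Fm → Fm → Fm
  | neg  : Fm → Fm
  | top  : Fm
  | bot  : Fm
deriving DecidableEq

/-- The atom `i` occurs in a formula. -/
def occurs (i : ℕ) : Fm → Prop
  | .atom j => i = j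
  | .conj φ ψ => occurs i φ ∨ occurs i ψ
  | .disj φ ψ => occurs i φ ∨ occurs i ψ
  | .neg φ => occurs i φ
  | .top => False
  | .bot => False

/-- The four elements of the De Morgan algebra B4. -/
inductive B4 : Type where
  | f | n | b | t
deriving DecidableEq

/-- Meet in the truth order of B4 (bottom `f`, top `t`, `n` and `b` incomparable). -/
def bmeet : B4 → B4 → B4
  | .f, _ => .f
  | _, .f => .f
  | .t, x => x
  | x, .t => x
  | .n, .n => .n
  | .b, .b => .b
  | .n, .b => .f
  | .b, .n => .f

/-- Join in the truth order of B4. -/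
def bjoin : B4 → B4 → B4
  | .t, _ => .t
  | _, .t => .t
  | .f, x => x
  | x, .f => x
  | .n, .n => .n
  | .b, .b => .b
  | .n, .b => .t
  | .b, .n => .t

/-- De Morgan negation on B4: swaps `f` and `t`, fixes `n` and `b`. -/
def bneg : B4 → B4
  | .f => .t
  | .t => .f
  | .n => .n
  | .b => .b

/-- The information order ⊑ on B4: bottom `n`, top `b`, `f` and `t` incomparable. -/
def infoLe (x y : B4) : Prop := x = y ∨ x = B4.n ∨ y = B4.b

/-- Evaluation of a formula in B4 under an atom assignment (the unique homomorphic
extension of the valuation of atoms). -/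
def evalv (v : ℕ → B4) : Fm → B4
  | .atom j => v j
  | .conj φ ψ => bmeet (evalv v φ) (evalv v ψ)
  | .disj φ ψ => bjoin (evalv v φ) (evalv v ψ)
  | .neg φ => bneg (evalv v φ)
  | .top => .t
  | .bot => .f

/-- Designated values of the matrices B4 and LP3: `t` and `b`. -/
def desB (x : B4) : Prop := x = B4.t ∨ x = B4.b

/-- Consequence over the matrix B4 (designated values {t, b}): the Dunn–Belnap logic B. -/
def Bcon (Γ : Set Fm) (φ : Fm) : Prop :=
  ∀ v : ℕ → B4, (∀ γ ∈ Γ, desB (evalv v γ)) → desB (evalv v φ)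

/-- Consequence over the submatrix LP3 on {f, b, t} (designated {t, b}): the Logic of Paradox. -/
def LPcon (Γ : Set Fm) (φ : Fm) : Prop :=
  ∀ v : ℕ → B4, (∀ j, v j ≠ B4.n) → (∀ γ ∈ Γ, desB (evalv v γ)) → desB (evalv v φ)

/-- Consequence over the submatrix K3 on {f, n, t} (designated {t}): strong Kleene logic. -/
def Kcon (Γ : Set Fm) (φ : Fm) : Prop :=
  ∀ v : ℕ → B4, (∀ j, v j ≠ B4.b) → (∀ γ ∈ Γ, evalv v γ = B4.t) → evalv v φ = B4.t

/-- Consequence over the matrix ETL4 (the algebra B4 with designated set {t}): Exactly True Logic. -/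
def ETLcon (Γ : Set Fm) (φ : Fm) : Prop :=
  ∀ v : ℕ → B4, (∀ γ ∈ Γ, evalv v γ = B4.t) → evalv v φ = B4.t

/-- Consequence over the Boolean submatrix on {f, t} (designated {t}): classical logic CL. -/
def CLcon (Γ : Set Fm) (φ : Fm) : Prop :=
  ∀ v : ℕ → B4, (∀ j, v j = B4.f ∨ v j = B4.t) →
    (∀ γ ∈ Γ, evalv v γ = B4.t) → evalv v φ = B4.t

section Stmt17Aux

/-- List of atoms of a formula. -/
def atomsL : Fm → List ℕ
  | .atom j => [j]
  | .conj a b => atomsL a ++ atomsL b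
  | .disj a b => atomsL a ++ atomsL b
  | .neg a => atomsL a
  | .top => []
  | .bot => []

lemma occurs_iff_mem (i : ℕ) (θ : Fm) : occurs i θ ↔ i ∈ atomsL θ := by
  induction θ <;> simp [occurs, atomsL, *]

instance : Fintype B4 := ⟨{.f, .n, .b, .t}, by intro x; cases x <;> simp⟩

instance : DecidableRel infoLe := fun x y => by unfold infoLe; infer_instance

instance (x : B4) : Decidable (desB x) := by unfold desB; infer_instance

lemma desB_bmeet_iff {x y : B4} : desB (bmeet x y) ↔ desB x ∧ desB y := by
  revert x y; decide

lemma desB_bjoin_iff {x y : B4} : desB (bjoin x y) ↔ desB x ∨ desB y := by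
  revert x y; decide

lemma infoLe_refl (x : B4) : infoLe x x := Or.inl rfl

lemma bmeet_mono : ∀ {x x' y y' : B4}, infoLe x x' → infoLe y y' →
    infoLe (bmeet x y) (bmeet x' y') := by decide

lemma bjoin_mono : ∀ {x x' y y' : B4}, infoLe x x' → infoLe y y' →
    infoLe (bjoin x y) (bjoin x' y') := by decide

lemma bneg_mono : ∀ {x y : B4}, infoLe x y → infoLe (bneg x) (bneg y) := by decide

lemma desB_of_infoLe : ∀ {x y : B4}, infoLe x y → desB x → desB y := by decide

lemma evalv_congr {v w : ℕ → B4} : ∀ θ : Fm, (∀ i, occurs i θ → v i = w i) →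
    evalv v θ = evalv w θ
  | .atom j, h => h j rfl
  | .conj a b, h => by
      simp only [evalv]
      rw [evalv_congr a (fun i hi => h i (Or.inl hi)),
        evalv_congr b (fun i hi => h i (Or.inr hi))]
  | .disj a b, h => by
      simp only [evalv]
      rw [evalv_congr a (fun i hi => h i (Or.inl hi)),
        evalv_congr b (fun i hi => h i (Or.inr hi))]
  | .neg a, h => by
      simp only [evalv]
      rw [evalv_congr a h]
  | .top, _ => rfl
  | .bot, _ => rfl

lemma evalv_mono {v w : ℕ → B4} : ∀ θ : Fm, (∀ i, occurs i θ → infoLe (v i) (w i)) →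
    infoLe (evalv v θ) (evalv w θ)
  | .atom j, h => h j rfl
  | .conj a b, h =>
      bmeet_mono (evalv_mono a (fun i hi => h i (Or.inl hi)))
        (evalv_mono b (fun i hi => h i (Or.inr hi)))
  | .disj a b, h =>
      bjoin_mono (evalv_mono a (fun i hi => h i (Or.inl hi)))
        (evalv_mono b (fun i hi => h i (Or.inr hi)))
  | .neg a, h => bneg_mono (evalv_mono a h)
  | .top, _ => infoLe_refl _
  | .bot, _ => infoLe_refl _

/-- Literal describing value `x` of atom `i`. -/
def litFm : B4 → ℕ → Fm
  | .t, i => .atom i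
  | .f, i => .neg (.atom i)
  | .b, i => .conj (.atom i) (.neg (.atom i))
  | .n, _ => .top

lemma occurs_litFm {j : ℕ} {x : B4} {i : ℕ} (h : occurs j (litFm x i)) : j = i := by
  cases x <;> simp_all [litFm, occurs]

lemma desB_litFm_self (v : ℕ → B4) (i : ℕ) : desB (evalv v (litFm (v i) i)) := by
  rcases h : v i <;> simp [litFm, evalv, h, bneg, bmeet, desB]

lemma infoLe_of_desB_litFm {w : ℕ → B4} {x : B4} {i : ℕ}
    (h : desB (evalv w (litFm x i))) : infoLe x (w i) := by
  cases x <;> rcases hw : w i <;> simp_all [litFm, evalv, bneg, bmeet, desB, infoLe]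

/-- Conjunction of literals describing the values `xs` on the atoms `L`. -/
def dlt2 : List ℕ → List B4 → Fm
  | [], _ => .top
  | _ :: _, [] => .top
  | i :: L, x :: xs => .conj (litFm x i) (dlt2 L xs)

lemma occurs_dlt2 {j : ℕ} : ∀ (L : List ℕ) (xs : List B4), occurs j (dlt2 L xs) → j ∈ L
  | [], _, h => by simp [dlt2, occurs] at h
  | _ :: _, [], h => by simp [dlt2, occurs] at h
  | i :: L, x :: xs, h => by
      simp only [dlt2, occurs] at h
      rcases h with h | h
      · exact List.mem_cons.mpr (Or.inl (occurs_litFm h))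
      · exact List.mem_cons.mpr (Or.inr (occurs_dlt2 L xs h))

lemma desB_dlt2_self (v : ℕ → B4) : ∀ L : List ℕ, desB (evalv v (dlt2 L (L.map v)))
  | [] => by simp [dlt2, evalv, desB]
  | i :: L => by
      simp only [List.map_cons, dlt2, evalv, desB_bmeet_iff]
      exact ⟨desB_litFm_self v i, desB_dlt2_self v L⟩

lemma infoLe_of_desB_dlt2 {w v : ℕ → B4} :
    ∀ L : List ℕ, desB (evalv w (dlt2 L (L.map v))) → ∀ i ∈ L, infoLe (v i) (w i)
  | [], _, i, hi => by simp at hi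
  | j :: L, h, i, hi => by
      simp only [List.map_cons, dlt2, evalv, desB_bmeet_iff] at h
      rcases List.mem_cons.mp hi with rfl | hi
      · exact infoLe_of_desB_litFm h.1
      · exact infoLe_of_desB_dlt2 L h.2 i hi

/-- All lists over B4 of a given length. -/
def allLists : ℕ → List (List B4)
  | 0 => [[]]
  | n + 1 => (allLists n).flatMap (fun l => [.f :: l, .n :: l, .b :: l, .t :: l])

lemma mem_allLists : ∀ xs : List B4, xs ∈ allLists xs.length
  | [] => by simp [allLists]
  | x :: xs => by
      simp only [List.length_cons, allLists, List.mem_flatMap]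
      exact ⟨xs, mem_allLists xs, by cases x <;> simp⟩

def bigDisj : List Fm → Fm
  | [] => .bot
  | χ :: l => .disj χ (bigDisj l)

lemma desB_bigDisj {v : ℕ → B4} :
    ∀ l : List Fm, desB (evalv v (bigDisj l)) ↔ ∃ χ ∈ l, desB (evalv v χ)
  | [] => by simp [bigDisj, evalv, desB]
  | χ :: l => by simp [bigDisj, evalv, desB_bjoin_iff, desB_bigDisj l]

lemma occurs_bigDisj {j : ℕ} : ∀ l : List Fm, occurs j (bigDisj l) → ∃ χ ∈ l, occurs j χ
  | [] => by simp [bigDisj, occurs]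
  | χ :: l => by
      intro h
      simp only [bigDisj, occurs] at h
      rcases h with h | h
      · exact ⟨χ, by simp, h⟩
      · obtain ⟨θ, hm, ho⟩ := occurs_bigDisj l h
        exact ⟨θ, by simp [hm], ho⟩

def repairB : B4 → B4
  | .n => .b
  | x => x

end Stmt17Aux

/-- LP enjoys (B, LP)-interpolation. -/
theorem stmt17 (φ ψ : Fm) (h : LPcon {φ} ψ) :
    ∃ χ : Fm, (∀ i, occurs i χ → occurs i φ ∧ occurs i ψ) ∧
      Bcon {φ} χ ∧ LPcon {χ} ψ := by
  classical
  set L : List ℕ := (atomsL φ).filter (fun i => decide (i ∈ atomsL ψ)) with hLdef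
  have hmemL : ∀ i, i ∈ L ↔ (i ∈ atomsL φ ∧ i ∈ atomsL ψ) := by
    intro i
    simp [hLdef, List.mem_filter]
  set cand : List (List B4) := (allLists L.length).filter
    (fun xs => decide (∃ v : ℕ → B4, desB (evalv v φ) ∧ L.map v = xs)) with hcdef
  refine ⟨bigDisj (cand.map (dlt2 L)), ?_, ?_, ?_⟩
  · -- atoms of χ occur in both φ and ψ
    intro i hi
    obtain ⟨θ, hθm, hθo⟩ := occurs_bigDisj _ hi
    obtain ⟨xs, _, rfl⟩ := List.mem_map.mp hθm
    have hiL : i ∈ L := occurs_dlt2 L xs hθo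
    rw [(hmemL i)] at hiL
    exact ⟨(occurs_iff_mem i φ).mpr hiL.1, (occurs_iff_mem i ψ).mpr hiL.2⟩
  · -- Bcon {φ} χ
    intro v hv
    have hφ : desB (evalv v φ) := hv φ rfl
    have hmem : L.map v ∈ cand := by
      rw [hcdef, List.mem_filter]
      refine ⟨?_, ?_⟩
      · have := mem_allLists (L.map v)
        simpa using this
      · simp only [decide_eq_true_eq]
        exact ⟨v, hφ, rfl⟩
    exact (desB_bigDisj _).mpr ⟨dlt2 L (L.map v), List.mem_map.mpr ⟨L.map v, hmem, rfl⟩,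
      desB_dlt2_self v L⟩
  · -- LPcon {χ} ψ
    intro w hwn hwd
    have hχ := hwd _ rfl
    obtain ⟨θ, hθm, hθd⟩ := (desB_bigDisj _).mp hχ
    obtain ⟨xs, hxs, rfl⟩ := List.mem_map.mp hθm
    rw [hcdef, List.mem_filter] at hxs
    obtain ⟨v, hvφ, rfl⟩ := decide_eq_true_eq.mp hxs.2
    have hinf : ∀ i ∈ L, infoLe (v i) (w i) := infoLe_of_desB_dlt2 L hθd
    set u : ℕ → B4 := fun i => if i ∈ atomsL ψ then w i else repairB (v i) with hudef
    have hun : ∀ j, u j ≠ B4.n := by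
      intro j
      rw [hudef]
      dsimp only
      split
      · exact hwn j
      · cases v j <;> simp [repairB]
    have huφ : desB (evalv u φ) := by
      refine desB_of_infoLe (evalv_mono φ ?_) hvφ
      intro i hio
      have hiφ : i ∈ atomsL φ := (occurs_iff_mem i φ).mp hio
      rw [hudef]
      dsimp only
      split
      · next hmem =>
          exact hinf i ((hmemL i).mpr ⟨hiφ, hmem⟩)
      · cases v i <;> simp [repairB, infoLe]
    have huψ : desB (evalv u ψ) := h u hun (by
      intro γ hγ
      rw [Set.mem_singleton_iff.mp hγ]
      exact huφ)
    have heq : evalv u ψ = evalv w ψ := by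
      refine evalv_congr ψ ?_
      intro i hio
      rw [hudef]
      simp [(occurs_iff_mem i ψ).mp hio]
    rwa [heq] at huψ
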